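/- Survivor representation in the Markov case: for every t ≥ 0, 1 − F(t) = exp{−Λ₁(t)} + ∫₀ᵗ exp{−Λ⋆(s) − Λ₀(s) − (Λ₁(t) − Λ₁(s))} (λ₁(s) − λ₀(s)) ds. -/

import Mathlib

/-!
In the Markov case `Λ₁(t,s) = Λ₁(t) - Λ₁(s)`, and for fixed `t` the sum of the integrand of `F(t)`
and the integrand on the right is the derivative in `s` of
`G(s) = e^{-Λ⋆(s)-Λ₀(s)} (e^{-(Λ₁(t)-Λ₁(s))} - 1)`.
Since `G(t) = 0` and `G(0) = e^{-Λ₁(t)} - 1`, the fundamental theorem of calculus gives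
`F(t) + ∫₀ᵗ … = 1 - e^{-Λ₁(t)}`.
-/

open MeasureTheory ProbabilityTheory Filter Set

/-- Cumulative hazard `Λ(t) = ∫₀ᵗ λ(u) du`. -/
noncomputable def cumHaz (lam : ℝ → ℝ) (t : ℝ) : ℝ := ∫ u in (0:ℝ)..t, lam u

/-- Post-intermediate cumulative hazard `Λ₁(t,s) = ∫ₛᵗ λ₁(u,s) du`. -/
noncomputable def cumHaz1 (lam1 : ℝ → ℝ → ℝ) (t s : ℝ) : ℝ := ∫ u in s..t, lam1 u s

/-- The counterfactual cumulative incidence function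
`F(t) = ∫₀ᵗ e^{−Λ₀(s)−Λ⋆(s)} λ₀(s) ds + ∫₀ᵗ e^{−Λ₀(s)−Λ⋆(s)} λ⋆(s) (1 − e^{−Λ₁(t,s)}) ds`. -/
noncomputable def cif (lamS lam0 : ℝ → ℝ) (lam1 : ℝ → ℝ → ℝ) (t : ℝ) : ℝ :=
  (∫ s in (0:ℝ)..t, Real.exp (-cumHaz lam0 s - cumHaz lamS s) * lam0 s) +
  ∫ s in (0:ℝ)..t, Real.exp (-cumHaz lam0 s - cumHaz lamS s) * lamS s *
    (1 - Real.exp (-cumHaz1 lam1 t s))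

open intervalIntegral

section CumulativeHazard

variable {f : ℝ → ℝ} {s t : ℝ}

lemma cumHaz_zero (f : ℝ → ℝ) : cumHaz f 0 = 0 := integral_same

lemma continuousOn_cumHaz (hf : ContinuousOn f (Icc 0 t)) (ht : 0 ≤ t) :
    ContinuousOn (cumHaz f) (Icc 0 t) := by
  rw [← uIcc_of_le ht] at hf ⊢
  exact continuousOn_primitive_interval' hf.intervalIntegrable left_mem_uIcc

lemma hasDerivAt_cumHaz (hf : ContinuousOn f (Icc 0 t)) (hs : s ∈ Ioo 0 t) :
    HasDerivAt (cumHaz f) (f s) s :=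
  integral_hasDerivAt_right
    ((hf.mono (uIcc_of_le hs.1.le ▸ Icc_subset_Icc_right hs.2.le)).intervalIntegrable)
    (ContinuousOn.stronglyMeasurableAtFilter isOpen_Ioo (hf.mono Ioo_subset_Icc_self) s hs)
    (hf.continuousAt (Icc_mem_nhds hs.1 hs.2))

lemma cumHaz1_eq_sub_cumHaz (hs : IntervalIntegrable f volume 0 s)
    (ht : IntervalIntegrable f volume 0 t) :
    cumHaz1 (fun u _ => f u) t s = cumHaz f t - cumHaz f s :=
  (integral_interval_sub_left ht hs).symm

end CumulativeHazard

theorem cif_markov_add_integral_eq {lamS lam0 lam1 : ℝ → ℝ} {t : ℝ}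
    (hS : ContinuousOn lamS (Icc 0 t)) (h0 : ContinuousOn lam0 (Icc 0 t))
    (h1 : ContinuousOn lam1 (Icc 0 t)) (ht : 0 ≤ t) :
    cif lamS lam0 (fun u _ => lam1 u) t +
        ∫ s in (0:ℝ)..t,
          Real.exp (-cumHaz lamS s - cumHaz lam0 s - (cumHaz lam1 t - cumHaz lam1 s)) *
            (lam1 s - lam0 s) =
      1 - Real.exp (-cumHaz lam1 t) := by
  set E : ℝ → ℝ := fun s => Real.exp (-cumHaz lam0 s - cumHaz lamS s) with hE
  set K : ℝ → ℝ := fun s =>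
    Real.exp (-cumHaz lamS s - cumHaz lam0 s - (cumHaz lam1 t - cumHaz lam1 s)) with hK
  have hCS := continuousOn_cumHaz hS ht
  have hC0 := continuousOn_cumHaz h0 ht
  have hC1 := continuousOn_cumHaz h1 ht
  have hEc : ContinuousOn E (Icc 0 t) := by fun_prop
  have hKc : ContinuousOn K (Icc 0 t) := by fun_prop
  have hEK : ∀ s, E s * Real.exp (-(cumHaz lam1 t - cumHaz lam1 s)) = K s := fun s => by
    simp only [hE, hK, ← Real.exp_add]; ring_nf
  have hint : ∀ {g : ℝ → ℝ}, ContinuousOn g (Icc 0 t) → IntervalIntegrable g volume 0 t :=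
    fun hg => (uIcc_of_le ht ▸ hg).intervalIntegrable
  have hFTC : ∫ s in (0:ℝ)..t,
      K s * (lam1 s - lamS s - lam0 s) - E s * (-lam0 s - lamS s) = (K t - E t) - (K 0 - E 0) := by
    refine integral_eq_sub_of_hasDerivAt_of_le ht (hKc.sub hEc) (fun s hs => ?_)
      (hint (by fun_prop))
    have hL := fun {f} (hf : ContinuousOn f (Icc 0 t)) => hasDerivAt_cumHaz hf hs
    have hKd : HasDerivAt (fun s => -cumHaz lamS s - cumHaz lam0 s -
        (cumHaz lam1 t - cumHaz lam1 s)) (-lamS s - lam0 s - (0 - lam1 s)) s :=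
      ((hL hS).neg.sub (hL h0)).sub ((hasDerivAt_const s _).sub (hL h1))
    have hEd : HasDerivAt (fun s => -cumHaz lam0 s - cumHaz lamS s) (-lam0 s - lamS s) s :=
      (hL h0).neg.sub (hL hS)
    convert hKd.exp.sub hEd.exp using 2; ring
  have hcif : cif lamS lam0 (fun u _ => lam1 u) t = (∫ s in (0:ℝ)..t, E s * lam0 s) +
      ∫ s in (0:ℝ)..t, E s * lamS s * (1 - Real.exp (-(cumHaz lam1 t - cumHaz lam1 s))) := by
    refine congrArg _ (integral_congr fun s hs => ?_)
    rw [uIcc_of_le ht] at hs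
    have h1s : IntervalIntegrable lam1 volume 0 s :=
      (h1.mono (uIcc_of_le hs.1 ▸ Icc_subset_Icc_right hs.2)).intervalIntegrable
    rw [cumHaz1_eq_sub_cumHaz h1s (hint h1)]
  have hends : (K t - E t) - (K 0 - E 0) = 1 - Real.exp (-cumHaz lam1 t) := by
    simp only [hE, hK, cumHaz_zero]; ring_nf; rw [Real.exp_zero]; ring
  rw [hcif, ← integral_add (hint (by fun_prop)) (hint (by fun_prop)),
    ← integral_add (hint (by fun_prop)) (hint (by fun_prop)), ← hends, ← hFTC]
  exact integral_congr fun s _ => by linear_combination (-lamS s) * hEK s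

theorem cif_survivor_markov_general (lamS lam0 lam1 : ℝ → ℝ)
    (hScont : ContinuousOn lamS (Set.Ici 0))
    (h0cont : ContinuousOn lam0 (Set.Ici 0))
    (h1cont : ContinuousOn lam1 (Set.Ici 0)) :
    ∀ t : ℝ, 0 ≤ t →
      1 - cif lamS lam0 (fun u _ => lam1 u) t =
        Real.exp (-cumHaz lam1 t) +
          ∫ s in (0:ℝ)..t,
            Real.exp (-cumHaz lamS s - cumHaz lam0 s - (cumHaz lam1 t - cumHaz lam1 s)) *
              (lam1 s - lam0 s) := by
  intro t ht
  have := cif_markov_add_integral_eq (hScont.mono Icc_subset_Ici_self)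
    (h0cont.mono Icc_subset_Ici_self) (h1cont.mono Icc_subset_Ici_self) ht
  linarith

/-- survivor representation in the Markov case, where
`λ₁(t,s) = λ₁(t)` and `Λ₁(t) = ∫₀ᵗ λ₁(u) du`. -/
theorem cif_survivor_markov (lamS lam0 lam1 : ℝ → ℝ)
    (hScont : ContinuousOn lamS (Set.Ici 0))
    (h0cont : ContinuousOn lam0 (Set.Ici 0))
    (h1cont : ContinuousOn lam1 (Set.Ici 0))
    (hSnn : ∀ t ∈ Set.Ici (0:ℝ), 0 ≤ lamS t)
    (h0nn : ∀ t ∈ Set.Ici (0:ℝ), 0 ≤ lam0 t)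
    (h1nn : ∀ t ∈ Set.Ici (0:ℝ), 0 ≤ lam1 t) :
    ∀ t : ℝ, 0 ≤ t →
      1 - cif lamS lam0 (fun u _ => lam1 u) t =
        Real.exp (-cumHaz lam1 t) +
          ∫ s in (0:ℝ)..t,
            Real.exp (-cumHaz lamS s - cumHaz lam0 s - (cumHaz lam1 t - cumHaz lam1 s)) *
              (lam1 s - lam0 s) :=
  cif_survivor_markov_general lamS lam0 lam1 hScont h0cont h1cont
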